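/- If the Freyd functor F : 𝓒 ⥤ 𝓟𝓑 is faithful, then F reflects isomorphisms: a morphism f : X → Y in 𝓒 is an isomorphism if and only if F(f) : F(X) → F(Y) is an isomorphism of presheaves. -/

import Mathlib

open CategoryTheory Limits Pretriangulated Opposite

universe v u

/-- The category of additive presheaves (of abelian groups) on a preadditive category. -/
noncomputable abbrev AddPresheaf (D : Type u) [Category.{v} D] [Preadditive D] :=
  Dᵒᵖ ⥤+ AddCommGrpCat.{v}

section Presheaves

variable (B C : Type u) [Category.{v} B] [Category.{v} C] [Preadditive B] [Preadditive C]

/-- The restriction functor `U : 𝓟𝓒 ⥤ 𝓟𝓑` given by precomposition with `ιᵒᵖ`. -/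
noncomputable def restrictU (ι : B ⥤ C) [ι.Additive] :
    AddPresheaf C ⥤ AddPresheaf B where
  obj G := ⟨ι.op ⋙ G.1, letI : G.1.Additive := G.2; (inferInstance : (ι.op ⋙ G.1).Additive)⟩
  map α := ObjectProperty.homMk (Functor.whiskerLeft ι.op α.hom)

/-- The additive Yoneda embedding `Y : 𝓒 ⥤ 𝓟𝓒`, `Y(X) = 𝓒(−, X)`. -/
noncomputable def yonedaAdd : C ⥤ AddPresheaf C where
  obj X := ⟨preadditiveYoneda.obj X, (inferInstance : (preadditiveYoneda.obj X).Additive)⟩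
  map f := ObjectProperty.homMk (preadditiveYoneda.map f)

/-- The Freyd functor `F = Y ⋙ U : 𝓒 ⥤ 𝓟𝓑`, `F(X) = 𝓒(ι(−), X)`. -/
noncomputable def freydF (ι : B ⥤ C) [ι.Additive] : C ⥤ AddPresheaf B :=
  yonedaAdd C ⋙ restrictU B C ι

end Presheaves

section Triangulated

variable (T : Type u) [Category.{v} T] [Preadditive T] [HasZeroObject T] [HasShift T ℤ]
  [∀ n : ℤ, (shiftFunctor T n).Additive] [Pretriangulated T] [IsTriangulated T]

/-- A class of objects of a (pre)triangulated category is *thick-closed* if it is closed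
under isomorphisms, shifts, retracts, and two-out-of-three for distinguished triangles. -/
def IsThickClosed (P : Set T) : Prop :=
  (∀ X Y : T, (X ≅ Y) → X ∈ P → Y ∈ P) ∧
  (∀ (X : T) (n : ℤ), X ∈ P → X⟦n⟧ ∈ P) ∧
  (∀ (X Y : T) (i : X ⟶ Y) (r : Y ⟶ X), i ≫ r = 𝟙 X → Y ∈ P → X ∈ P) ∧
  (∀ Tr : Triangle T, Tr ∈ (distTriang T) →
    ((Tr.obj₁ ∈ P → Tr.obj₂ ∈ P → Tr.obj₃ ∈ P) ∧
     (Tr.obj₂ ∈ P → Tr.obj₃ ∈ P → Tr.obj₁ ∈ P) ∧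
     (Tr.obj₁ ∈ P → Tr.obj₃ ∈ P → Tr.obj₂ ∈ P)))

/-- The thick subcategory generated by a class of objects: the smallest thick-closed
class of objects containing it. -/
def thickClosure (S : Set T) : Set T :=
  ⋂₀ {P : Set T | S ⊆ P ∧ IsThickClosed T P}

lemma subset_thickClosure (S : Set T) : S ⊆ thickClosure T S :=
  fun _ hX => Set.mem_sInter.2 fun _ hP => hP.1 hX

lemma shift_mem_thickClosure {S : Set T} {X : T} (hX : X ∈ thickClosure T S) (n : ℤ) :
    X⟦n⟧ ∈ thickClosure T S :=
  Set.mem_sInter.2 fun P hP => hP.2.2.1 X n (Set.mem_sInter.1 hX P hP)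

/-- The full subcategory `𝓑`. -/
abbrev BSub (Bs : Set T) := ObjectProperty.FullSubcategory (· ∈ Bs)

/-- The full subcategory `𝓒`: the thick subcategory generated by `𝓑`. -/
abbrev CSub (Bs : Set T) := ObjectProperty.FullSubcategory (· ∈ thickClosure T Bs)

/-- The inclusion `ι : 𝓑 ⥤ 𝓒`. -/
noncomputable def inclBC (Bs : Set T) : BSub T Bs ⥤ CSub T Bs :=
  ObjectProperty.ιOfLE (fun _ hX => subset_thickClosure T Bs hX)

instance (Bs : Set T) : (inclBC T Bs).Additive := ⟨rfl⟩

/-- The Freyd functor `F : 𝓒 ⥤ 𝓟𝓑`. -/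
noncomputable def freydT (Bs : Set T) : CSub T Bs ⥤ AddPresheaf (BSub T Bs) :=
  freydF (BSub T Bs) (CSub T Bs) (inclBC T Bs)

end Triangulated

/-!
Complete `f` to a distinguished triangle `X ⟶ Y ⟶ Z ⟶ X⟦1⟧`; then `Z ∈ 𝓒`. If `F(f)` is an
isomorphism, then for every `B ∈ 𝓑` composition with `f` is surjective on `𝓣(B, X)`, and, since
`B⟦-1⟧ ∈ 𝓑` and `Σ⁻¹ ⊣ Σ`, composition with `f⟦1⟧` is injective on `𝓣(B, X⟦1⟧)`. Exactness of
`𝓣(B, -)` on the triangle then forces `𝓣(B, Z) = 0`, so `F(𝟙 Z) = F(0)`, hence `𝟙 Z = 0` by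
faithfulness: `Z` is zero and `f` is an isomorphism.
-/

lemma CategoryTheory.Adjunction.injective_comp_map_iff {C D : Type*} [Category C] [Category D]
    {F : C ⥤ D} {G : D ⥤ C} (adj : F ⊣ G) {B : C} {X Y : D} (f : X ⟶ Y) :
    Function.Injective (fun a : B ⟶ G.obj X => a ≫ G.map f) ↔
      Function.Injective (fun a : F.obj B ⟶ X => a ≫ f) := by
  have : (fun a : B ⟶ G.obj X => a ≫ G.map f) =
      adj.homEquiv B Y ∘ (fun a => a ≫ f) ∘ (adj.homEquiv B X).symm := by
    funext a
    simp [Adjunction.homEquiv_naturality_right]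
  rw [this, Equiv.comp_injective, Equiv.injective_comp]

section Pretriangulated

variable {C : Type*} [Category C] [Preadditive C] [HasZeroObject C] [HasShift C ℤ]
  [∀ n : ℤ, (CategoryTheory.shiftFunctor C n).Additive] [Pretriangulated C]

lemma CategoryTheory.Pretriangulated.Triangle.eq_zero_of_surjective_of_injective
    (Tr : Triangle C) (hTr : Tr ∈ distTriang C)
    {B : C} (h₁ : Function.Surjective fun a : B ⟶ Tr.obj₁ => a ≫ Tr.mor₁)
    (h₂ : Function.Injective fun a : B ⟶ Tr.obj₁⟦(1 : ℤ)⟧ => a ≫ Tr.mor₁⟦(1 : ℤ)⟧')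
    (u : B ⟶ Tr.obj₃) : u = 0 := by
  have hu : u ≫ Tr.mor₃ = 0 := h₂ <| by
    simp only [Category.assoc, comp_distTriang_mor_zero₃₁ _ hTr, comp_zero, zero_comp]
  obtain ⟨v, rfl⟩ := Triangle.coyoneda_exact₃ _ hTr u hu
  obtain ⟨w, rfl⟩ := h₁ v
  simp only [Category.assoc, comp_distTriang_mor_zero₁₂ _ hTr, comp_zero]

end Pretriangulated

section Freyd

variable {B C : Type u} [Category.{v} B] [Category.{v} C] [Preadditive B] [Preadditive C]
  (ι : B ⥤ C) [ι.Additive]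

lemma bijective_comp_of_isIso_freydF_map {X Y : C} (f : X ⟶ Y)
    [IsIso ((freydF B C ι).map f)] (b : B) :
    Function.Bijective fun u : ι.obj b ⟶ X => u ≫ f :=
  ConcreteCategory.bijective_of_isIso
    (((AdditiveFunctor.forget _ _).map ((freydF B C ι).map f)).app (op b))

lemma freydF_map_eq_of_forall_comp_eq {X Y : C} {f g : X ⟶ Y}
    (h : ∀ (b : B) (u : ι.obj b ⟶ X), u ≫ f = u ≫ g) :
    (freydF B C ι).map f = (freydF B C ι).map g := by
  ext b u
  exact h b.unop u

end Freyd

section Thick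

variable {T : Type u} [Category.{v} T] [Preadditive T] [HasZeroObject T] [HasShift T ℤ]
  [∀ n : ℤ, (shiftFunctor T n).Additive] [Pretriangulated T] {Bs : Set T}

lemma mem_thickClosure_obj₃ {Tr : Triangle T} (hTr : Tr ∈ distTriang T)
    (h₁ : Tr.obj₁ ∈ thickClosure T Bs) (h₂ : Tr.obj₂ ∈ thickClosure T Bs) :
    Tr.obj₃ ∈ thickClosure T Bs :=
  Set.mem_sInter.2 fun P hP =>
    (hP.2.2.2.2 Tr hTr).1 (Set.mem_sInter.1 h₁ P hP) (Set.mem_sInter.1 h₂ P hP)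

variable [IsTriangulated T]

lemma bijective_comp_hom_of_isIso_freydT_map {X Y : CSub T Bs} (f : X ⟶ Y)
    [IsIso ((freydT T Bs).map f)] {b : T} (hb : b ∈ Bs) :
    Function.Bijective fun u : b ⟶ X.obj => u ≫ f.hom :=
  haveI : IsIso ((freydF _ _ (inclBC T Bs)).map f) := ‹IsIso ((freydT T Bs).map f)›
  InducedCategory.homEquiv.bijective.comp
    ((bijective_comp_of_isIso_freydF_map (inclBC T Bs) f ⟨b, hb⟩).comp
      InducedCategory.homEquiv.symm.bijective)

lemma isZero_obj_of_faithful_freydT (hF : (freydT T Bs).Faithful) (Z : CSub T Bs)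
    (hZ : ∀ b ∈ Bs, ∀ u : b ⟶ Z.obj, u = 0) : IsZero Z.obj := by
  have h : 𝟙 Z = 0 := (freydT T Bs).map_injective <|
    freydF_map_eq_of_forall_comp_eq _ fun b u => by
      obtain rfl : u = 0 := InducedCategory.hom_ext (hZ _ b.property _)
      simp
  exact (IsZero.iff_id_eq_zero _).2 (congrArg InducedCategory.Hom.hom h)

end Thick

/-- if the Freyd functor `F : 𝓒 ⥤ 𝓟𝓑` is faithful then it reflects
isomorphisms: a map `f : X → Y` in `𝓒` is an isomorphism if and only if
`F(f) : F(X) → F(Y)` is an isomorphism of presheaves. -/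
theorem freyd_reflects_isos_of_faithful
    (T : Type u) [Category.{v} T] [Preadditive T] [HasZeroObject T] [HasShift T ℤ]
    [∀ n : ℤ, (shiftFunctor T n).Additive] [Pretriangulated T] [IsTriangulated T]
    (Bs : Set T) (hBshift : ∀ X ∈ Bs, X⟦(1:ℤ)⟧ ∈ Bs ∧ X⟦(-1:ℤ)⟧ ∈ Bs)
    (hFaithful : (freydT T Bs).Faithful)
    (X Y : CSub T Bs) (f : X ⟶ Y) :
    IsIso f ↔ IsIso ((freydT T Bs).map f) := by
  refine ⟨fun _ => inferInstance, fun _ => ?_⟩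
  obtain ⟨Z, _, _, hT⟩ := distinguished_cocone_triangle f.hom
  have hZ : IsZero Z :=
    isZero_obj_of_faithful_freydT hFaithful ⟨Z, mem_thickClosure_obj₃ hT X.2 Y.2⟩
      fun b hb => Triangle.eq_zero_of_surjective_of_injective _ hT
        (bijective_comp_hom_of_isIso_freydT_map f hb).2
        (((shiftEquiv' T (-1 : ℤ) 1 (by norm_num)).toAdjunction.injective_comp_map_iff f.hom).2
          (bijective_comp_hom_of_isIso_freydT_map f (hBshift b hb).2).1)
  have : IsIso f.hom := (Triangle.isZero₃_iff_isIso₁ _ hT).1 hZ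
  exact (ObjectProperty.isIso_hom_iff f).1 this
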